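/- Equivalent execution sequences assign equal cost to every plan: if σ ∼ σ' are equivalent execution sequences of a constrained compositional workflow schema, then for every plan π : S(σ) → U, the total weight of π with respect to σ equals the total weight of π with respect to σ', i.e., w_σ(π) = w_{σ'}(π). -/

import Mathlib

/-!
In a sequence without repetitions, a step lies in the `i`-th subscope of a constraint exactly when
`i` of the constraint's release points precede it. That number is the total number of its release
points minus the number after the step; the first is fixed by `σ_R = σ'_R`, the second by the set
of release points after the step. Hence equivalent sequences have the same subscopes, satisfy the
same constraints and give every plan the same weight.
-/

open scoped Classical

variable {α U : Type*}

/-- The set of release points occurring strictly after `s` in `σ`. -/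
def afterRels [DecidableEq α] (isRel : α → Bool) (σ : List α) (s : α) : Finset α :=
  ((σ.drop (σ.idxOf s + 1)).filter isRel).toFinset

/-- Equivalence of execution sequences. -/
def Sim [DecidableEq α] (isRel : α → Bool) (σ σ' : List α) : Prop :=
  σ.filter isRel = σ'.filter isRel ∧
  (σ.filter (fun x => !isRel x)).toFinset = (σ'.filter (fun x => !isRel x)).toFinset ∧
  ∀ s ∈ σ, isRel s = false → afterRels isRel σ s = afterRels isRel σ' s

/-- The set of steps of a sequence. -/
def stepSet [DecidableEq α] (isRel : α → Bool) (l : List α) : Finset α :=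
  (l.filter (fun x => !isRel x)).toFinset

/-- A constraint with release points: scope `T`, authorized assignments `Θ`
(given as total functions, only their values on the relevant steps matter),
and release points `P`. -/
structure RConstraint (α U : Type*) where
  T : Finset α
  Θ : Set (α → U)
  P : Finset α

/-- A plan `π` satisfies a constraint `c` in the execution sequence `σ` iff its
restriction to each subscope (the part of the scope between consecutive release
points of `c` occurring in `σ`) extends to an authorized assignment. -/
def SatisfiesIn [DecidableEq α] (isRel : α → Bool) (c : RConstraint α U)
    (σ : List α) (π : α → U) : Prop :=
  ∀ seg ∈ σ.splitOnP (fun x => isRel x && decide (x ∈ c.P)),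
    ∃ f ∈ c.Θ, ∀ s ∈ c.T ∩ stepSet isRel seg, f s = π s

namespace List

theorem length_splitOnP (p : α → Bool) (l : List α) :
    (l.splitOnP p).length = l.countP p + 1 := by
  induction l with
  | nil => simp
  | cons a l ih =>
    obtain ⟨b, bs, hb⟩ := exists_cons_of_ne_nil (splitOnP_ne_nil p l)
    by_cases h : p a <;> simp_all [splitOnP_cons_eq_if_modifyHead]

theorem mem_getD_modifyHead_cons {L : List (List α)} (hL : L ≠ []) (a x : α) (i : ℕ) :
    x ∈ (L.modifyHead (a :: ·)).getD i [] ↔ x = a ∧ i = 0 ∨ x ∈ L.getD i [] := by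
  obtain ⟨b, bs, rfl⟩ := exists_cons_of_ne_nil hL
  cases i <;> simp

theorem mem_getD_splitOnP_iff [DecidableEq α] {p : α → Bool} {l : List α} (hl : l.Nodup)
    {x : α} (hx : p x = false) (i : ℕ) :
    x ∈ (l.splitOnP p).getD i [] ↔ x ∈ l ∧ (l.take (l.idxOf x)).countP p = i := by
  induction l generalizing i with
  | nil => cases i <;> simp
  | cons a l ih =>
    obtain ⟨hal, hnd⟩ := nodup_cons.mp hl
    by_cases hxa : x = a
    · subst hxa
      rw [splitOnP_cons_eq_if_modifyHead, if_neg (by simp [hx]),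
        mem_getD_modifyHead_cons (splitOnP_ne_nil p l), ih hnd]
      simp [hal, eq_comm]
    · by_cases ha : p a
      · rw [splitOnP_cons_eq_if_modifyHead, if_pos ha]
        cases i with
        | zero => simp [idxOf_cons_ne _ (Ne.symm hxa), ha]
        | succ i =>
          simp only [getD_cons_succ, ih hnd, idxOf_cons_ne _ (Ne.symm hxa)]
          simp [ha, hxa]
      · rw [splitOnP_cons_eq_if_modifyHead, if_neg (by simp [ha]),
          mem_getD_modifyHead_cons (splitOnP_ne_nil p l), ih hnd]
        simp [hxa, idxOf_cons_ne _ (Ne.symm hxa), ha]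

theorem countP_take_idxOf_add_countP_drop [DecidableEq α] (p : α → Bool) {l : List α} {x : α}
    (hx : x ∈ l) (hpx : p x = false) :
    (l.take (l.idxOf x)).countP p + (l.drop (l.idxOf x + 1)).countP p = l.countP p := by
  have hlt : l.idxOf x < l.length := idxOf_lt_length_iff.mpr hx
  conv_rhs => rw [← take_append_drop (l.idxOf x) l, drop_eq_getElem_cons hlt, getElem_idxOf hlt]
  simp [hpx]

theorem countP_and_eq_countP_filter (p q : α → Bool) (l : List α) :
    l.countP (fun x => p x && q x) = (l.filter p).countP q := by
  rw [countP_filter]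
  simp only [Bool.and_comm]

theorem countP_eq_of_toFinset_eq [DecidableEq α] (q : α → Bool) {l l' : List α} (hl : l.Nodup)
    (hl' : l'.Nodup) (h : l.toFinset = l'.toFinset) : l.countP q = l'.countP q :=
  (perm_of_nodup_nodup_toFinset_eq hl hl' h).countP_eq q

end List

section Workflow

variable [DecidableEq α] {isRel : α → Bool} {σ σ' : List α}

theorem mem_stepSet {l : List α} {s : α} : s ∈ stepSet isRel l ↔ s ∈ l ∧ isRel s = false := by
  simp [stepSet]

theorem Sim.mem_iff (hsim : Sim isRel σ σ') {s : α} (hs : isRel s = false) :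
    s ∈ σ ↔ s ∈ σ' := by
  simpa [hs] using congrArg (s ∈ ·) hsim.2.1

theorem Sim.symm (hsim : Sim isRel σ σ') : Sim isRel σ' σ :=
  ⟨hsim.1.symm, hsim.2.1.symm, fun s hs hrel =>
    (hsim.2.2 s ((hsim.mem_iff hrel).mpr hs) hrel).symm⟩

theorem Sim.countP_eq (hsim : Sim isRel σ σ') (q : α → Bool) :
    σ.countP (fun x => isRel x && q x) = σ'.countP (fun x => isRel x && q x) := by
  simp only [List.countP_and_eq_countP_filter, hsim.1]

theorem Sim.countP_take_idxOf_eq (hσ : σ.Nodup) (hσ' : σ'.Nodup) (hsim : Sim isRel σ σ')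
    (q : α → Bool) {s : α} (hs : s ∈ σ) (hrel : isRel s = false) :
    (σ.take (σ.idxOf s)).countP (fun x => isRel x && q x) =
      (σ'.take (σ'.idxOf s)).countP (fun x => isRel x && q x) := by
  have hpre := List.countP_take_idxOf_add_countP_drop (fun x => isRel x && q x) hs
    (by simp [hrel])
  have hpre' := List.countP_take_idxOf_add_countP_drop (fun x => isRel x && q x)
    ((hsim.mem_iff hrel).mp hs) (by simp [hrel])
  have hafter : ((σ.drop (σ.idxOf s + 1)).filter isRel).countP q =
      ((σ'.drop (σ'.idxOf s + 1)).filter isRel).countP q :=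
    List.countP_eq_of_toFinset_eq q ((hσ.sublist (List.drop_sublist _ _)).filter _)
      ((hσ'.sublist (List.drop_sublist _ _)).filter _) (hsim.2.2 s hs hrel)
  have htotal := hsim.countP_eq q
  simp only [List.countP_and_eq_countP_filter] at hpre hpre' htotal ⊢
  omega

theorem Sim.stepSet_getD_splitOnP_eq (hσ : σ.Nodup) (hσ' : σ'.Nodup) (hsim : Sim isRel σ σ')
    (q : α → Bool) (i : ℕ) :
    stepSet isRel ((σ.splitOnP (fun x => isRel x && q x)).getD i []) =
      stepSet isRel ((σ'.splitOnP (fun x => isRel x && q x)).getD i []) := by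
  ext s
  simp only [mem_stepSet]
  by_cases hrel : isRel s = false
  · have hsep : (isRel s && q s) = false := by simp [hrel]
    simp only [List.mem_getD_splitOnP_iff (p := fun x => isRel x && q x) hσ hsep,
      List.mem_getD_splitOnP_iff (p := fun x => isRel x && q x) hσ' hsep, hrel, and_true]
    have hmem := hsim.mem_iff hrel
    constructor <;> rintro ⟨hs, rfl⟩
    · exact ⟨hmem.mp hs, (hsim.countP_take_idxOf_eq hσ hσ' q hs hrel).symm⟩
    · exact ⟨hmem.mpr hs, hsim.countP_take_idxOf_eq hσ hσ' q (hmem.mpr hs) hrel⟩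
  · simp [hrel]

theorem Sim.satisfiesIn_of_satisfiesIn (hσ : σ.Nodup) (hσ' : σ'.Nodup)
    (hsim : Sim isRel σ σ') {c : RConstraint α U} {π : α → U}
    (h : SatisfiesIn isRel c σ' π) : SatisfiesIn isRel c σ π := by
  intro seg hseg
  obtain ⟨i, hi, rfl⟩ := List.getElem_of_mem hseg
  have hi' : i < (σ'.splitOnP (fun x => isRel x && decide (x ∈ c.P))).length := by
    rwa [List.length_splitOnP, ← hsim.countP_eq, ← List.length_splitOnP]
  obtain ⟨f, hf, hfπ⟩ := h _ (List.getElem_mem hi')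
  refine ⟨f, hf, fun s hs => hfπ s ?_⟩
  rwa [← List.getD_eq_getElem _ [] hi', ← hsim.stepSet_getD_splitOnP_eq hσ hσ',
    List.getD_eq_getElem]

theorem Sim.satisfiesIn_iff (hσ : σ.Nodup) (hσ' : σ'.Nodup) (hsim : Sim isRel σ σ')
    (c : RConstraint α U) (π : α → U) :
    SatisfiesIn isRel c σ π ↔ SatisfiesIn isRel c σ' π :=
  ⟨hsim.symm.satisfiesIn_of_satisfiesIn hσ' hσ, hsim.satisfiesIn_of_satisfiesIn hσ hσ'⟩

end Workflow

theorem sim_weight_eq_general [DecidableEq α] (isRel : α → Bool)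
    (C : List (RConstraint α U)) (wA : (α → U) → ℝ) (wC : RConstraint α U → ℝ)
    (σ σ' : List α) (hσ : σ.Nodup) (hσ' : σ'.Nodup)
    (hsim : Sim isRel σ σ') (π : α → U) :
    wA π + (C.map (fun c => if SatisfiesIn isRel c σ π then 0 else wC c)).sum =
    wA π + (C.map (fun c => if SatisfiesIn isRel c σ' π then 0 else wC c)).sum := by
  simp only [hsim.satisfiesIn_iff hσ hσ']

/-- Equivalent execution sequences assign equal total cost to every plan. -/
theorem sim_weight_eq [DecidableEq α] (isRel : α → Bool)
    (C : List (RConstraint α U)) (wA : (α → U) → ℝ) (wC : RConstraint α U → ℝ)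
    (hwC : ∀ c ∈ C, 0 < wC c)
    (σ σ' : List α) (hσ : σ.Nodup) (hσ' : σ'.Nodup)
    (hsim : Sim isRel σ σ') (π : α → U) :
    wA π + (C.map (fun c => if SatisfiesIn isRel c σ π then 0 else wC c)).sum =
    wA π + (C.map (fun c => if SatisfiesIn isRel c σ' π then 0 else wC c)).sum :=
  sim_weight_eq_general isRel C wA wC σ σ' hσ hσ' hsim π
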